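/- Let D be a finitely generated abelian group and S a periodic D-graded commutative ring, i.e., the set D' = {deg(u) : u ∈ S^× homogeneous} of degrees of homogeneous units is a subgroup of finite index in D. Then there exists a free abelian subgroup F ≤ D of finite index in D such that the Veronese subring S_F = ⊕_{d∈F} S_d is isomorphic as an S_0-algebra to the group algebra S_0[F] (a Laurent polynomial algebra S_0[T_1^{±1},…,T_r^{±1}] in r = rank(D) variables), by an isomorphism carrying S_d onto S_0·χ^d for each d ∈ F. -/

import Mathlib

/-!
Take `F = N • D` with `N` a multiple both of the index of the group `D'` of unit degrees and of the
exponent of the torsion subgroup of `D`: then `F ≤ D'`, `D ⧸ F` is finite, and `F` is torsion-free,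
hence free. Being free, `F` is projective, so the degree map from the group of homogeneous units
onto `D'` splits over `F`: there is a homomorphism `z ↦ u_z` into `Sˣ` with `u_z ∈ S_z`. The map
`∑ a_z χ^z ↦ ∑ a_z u_z` is then injective, as its terms lie in distinct degrees and the `u_z` are
units, and it is onto `S_F`, since every `s ∈ S_z` equals `(s u_z⁻¹) u_z` with `s u_z⁻¹ ∈ S_0`.
-/

/-- The Veronese subring `S_H = ⊕_{d ∈ H} S_d` of a `D`-graded ring `S` with respect to a
subgroup `H ≤ D`: the subring generated by the homogeneous elements whose degree lies in `H`. -/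
def veroneseSubring {D S : Type*} [AddCommGroup D] [CommRing S]
    (𝒜 : D → AddSubgroup S) (H : AddSubgroup D) : Subring S :=
  Subring.closure (⋃ d ∈ H, (𝒜 d : Set S))

namespace AddSubgroup

variable {D : Type*} [AddCommGroup D]

theorem range_nsmul_le {H : AddSubgroup D} {n : ℕ} (hn : H.index ∣ n) :
    (nsmulAddMonoidHom (α := D) n).range ≤ H := by
  rintro _ ⟨y, rfl⟩
  obtain ⟨k, rfl⟩ := hn
  rw [nsmulAddMonoidHom_apply, mul_nsmul]
  exact H.nsmul_mem (H.nsmul_index_mem y) k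

theorem isTorsionFree_range_nsmul {n : ℕ} (hn : ∀ x ∈ Submodule.torsion ℤ D, n • x = 0) :
    Module.IsTorsionFree ℤ (nsmulAddMonoidHom (α := D) n).range := by
  refine .of_smul_eq_zero fun k ⟨_, y, rfl⟩ hky => or_iff_not_imp_left.mpr fun hk => ?_
  rcases eq_or_ne n 0 with rfl | hn0
  · exact Subtype.ext (zero_nsmul y)
  have hy : y ∈ Submodule.torsion ℤ D :=
    ⟨⟨k * n, mem_nonZeroDivisors_of_ne_zero (by simp [hk, hn0])⟩, by
      simpa [mul_smul, ← natCast_zsmul] using congrArg Subtype.val hky⟩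
  exact Subtype.ext (hn y hy)

variable [AddGroup.FG D]

theorem finiteIndex_range_nsmul {n : ℕ} (hn : n ≠ 0) :
    (nsmulAddMonoidHom (α := D) n).range.FiniteIndex := by
  have : Finite (D ⧸ (nsmulAddMonoidHom (α := D) n).range) := by
    refine AddCommGroup.finite_of_fg_isAddTorsion _ fun x => ?_
    induction x using QuotientAddGroup.induction_on with
    | H y =>
      refine isOfFinAddOrder_iff_nsmul_eq_zero.mpr ⟨n, Nat.pos_of_ne_zero hn, ?_⟩
      rw [← QuotientAddGroup.mk_nsmul, QuotientAddGroup.eq_zero_iff]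
      exact ⟨y, rfl⟩
  exact finiteIndex_of_finite_quotient

variable (D) in
theorem exists_nsmul_torsion_eq_zero :
    ∃ n : ℕ, n ≠ 0 ∧ ∀ x ∈ Submodule.torsion ℤ D, n • x = 0 := by
  have : Module.Finite ℤ D := Module.Finite.iff_addGroup_fg.mpr ‹_›
  have : Finite (Submodule.torsion ℤ D) :=
    Module.finite_of_fg_torsion _ (Submodule.torsion_isTorsion (R := ℤ) (M := D))
  refine ⟨Nat.card (Submodule.torsion ℤ D), Nat.card_pos.ne', fun x hx => ?_⟩
  exact congrArg Subtype.val (card_nsmul_eq_zero' (x := (⟨x, hx⟩ : Submodule.torsion ℤ D)))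

theorem exists_free_finiteIndex_le (H : AddSubgroup D) [H.FiniteIndex] :
    ∃ F ≤ H, F.FiniteIndex ∧ Module.Free ℤ F := by
  obtain ⟨e, he, hkill⟩ := exists_nsmul_torsion_eq_zero D
  have := isTorsionFree_range_nsmul (D := D) (n := e * H.index) fun x hx => by
    rw [mul_nsmul, hkill x hx, smul_zero]
  have : Module.Finite ℤ D := Module.Finite.iff_addGroup_fg.mpr ‹_›
  exact ⟨_, range_nsmul_le (dvd_mul_left _ _),
    finiteIndex_range_nsmul (mul_ne_zero he FiniteIndex.index_ne_zero),
    Module.free_of_finite_type_torsion_free'⟩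

end AddSubgroup

theorem SetLike.mul_mem_graded_zero_left {ι R σ : Type*} [AddZeroClass ι] [Mul R] [SetLike σ R]
    {A : ι → σ} [SetLike.GradedMul A] {a b : R} {i : ι} (ha : a ∈ A 0) (hb : b ∈ A i) :
    a * b ∈ A i := by
  simpa using SetLike.mul_mem_graded ha hb

namespace GradedRing

variable {D S : Type*} [AddCommGroup D] [DecidableEq D] [CommRing S]
  {𝒜 : D → AddSubgroup S} [GradedRing 𝒜]

theorem coe_units_inv_mem_neg {u : Sˣ} {d : D} (hu : (u : S) ∈ 𝒜 d) : (↑u⁻¹ : S) ∈ 𝒜 (-d) := by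
  have key : (u : S) * (DirectSum.decompose 𝒜 (↑u⁻¹ : S) (-d) : S) = 1 := by
    rw [← DirectSum.coe_decompose_mul_add_of_left_mem 𝒜 hu, Units.mul_inv, add_neg_cancel,
      DirectSum.decompose_of_mem_same 𝒜 SetLike.GradedOne.one_mem]
  rw [Units.inv_eq_of_mul_eq_one_right key]
  exact SetLike.coe_mem _

variable (𝒜) in
def homogeneousUnits : AddSubgroup (D × Additive Sˣ) where
  carrier := {p | ((p.2.toMul : Sˣ) : S) ∈ 𝒜 p.1}
  zero_mem' := show ((1 : Sˣ) : S) ∈ 𝒜 0 from SetLike.GradedOne.one_mem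
  add_mem' {p q} hp hq :=
    show ((p.2.toMul * q.2.toMul : Sˣ) : S) ∈ 𝒜 (p.1 + q.1) from SetLike.mul_mem_graded hp hq
  neg_mem' {p} hp := show ((p.2.toMul⁻¹ : Sˣ) : S) ∈ 𝒜 (-p.1) from coe_units_inv_mem_neg hp

theorem exists_unitsHom_of_free (F : AddSubgroup D) [Module.Free ℤ F]
    (hF : ∀ d ∈ F, ∃ u : Sˣ, (u : S) ∈ 𝒜 d) :
    ∃ u : Multiplicative F →* Sˣ, ∀ z : F, (u (.ofAdd z) : S) ∈ 𝒜 z := by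
  let deg : homogeneousUnits 𝒜 →+ D := (AddMonoidHom.fst _ _).comp (homogeneousUnits 𝒜).subtype
  have hFdeg : F ≤ deg.range := fun d hd => by
    obtain ⟨u, hu⟩ := hF d hd
    exact ⟨⟨(d, .ofMul u), hu⟩, rfl⟩
  obtain ⟨h, hh⟩ := Module.projective_lifting_property deg.rangeRestrict.toIntLinearMap
    (AddSubgroup.inclusion hFdeg).toIntLinearMap deg.rangeRestrict_surjective
  refine ⟨AddMonoidHom.toMultiplicativeLeft
    ((AddMonoidHom.snd _ _).comp ((homogeneousUnits 𝒜).subtype.comp h.toAddMonoidHom)), fun z => ?_⟩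
  have hdeg : ((h z : homogeneousUnits 𝒜) : D × Additive Sˣ).1 = z :=
    congrArg Subtype.val (LinearMap.congr_fun hh z)
  exact hdeg ▸ (h z).2

open AddMonoidAlgebra

variable (𝒜) {F : AddSubgroup D} (u : Multiplicative F →* Sˣ)

noncomputable def laurentHom : AddMonoidAlgebra (𝒜 0) F →ₐ[𝒜 0] S :=
  AddMonoidAlgebra.lift (𝒜 0) S F ((Units.coeHom S).comp u)

theorem laurentHom_single (z : F) (a : 𝒜 0) :
    laurentHom 𝒜 u (single z a) = a * u (.ofAdd z) := by
  simp [laurentHom, Algebra.smul_def]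

theorem laurentHom_apply (x : AddMonoidAlgebra (𝒜 0) F) :
    laurentHom 𝒜 u x = ∑ z ∈ x.coeff.support, (x.coeff z : S) * u (.ofAdd z) := by
  simp [laurentHom, AddMonoidAlgebra.lift_apply, Finsupp.sum, Algebra.smul_def]

variable {𝒜 u} (hu : ∀ z : F, (u (.ofAdd z) : S) ∈ 𝒜 z)
include hu

theorem coe_decompose_laurentHom (x : AddMonoidAlgebra (𝒜 0) F) (z : F) :
    (DirectSum.decompose 𝒜 (laurentHom 𝒜 u x) z : S) = x.coeff z * u (.ofAdd z) := by
  induction x using AddMonoidAlgebra.induction_linear with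
  | zero => simp
  | add x y hx hy => simp [DirectSum.decompose_add, hx, hy, add_mul]
  | single w a =>
    rw [laurentHom_single, DirectSum.coe_decompose_mul_of_left_mem_zero 𝒜 a.2, coeff_single]
    rcases eq_or_ne w z with rfl | hwz
    · rw [DirectSum.decompose_of_mem_same 𝒜 (hu w), Finsupp.single_eq_same]
    · rw [DirectSum.decompose_of_mem_ne 𝒜 (hu w) (Subtype.coe_injective.ne hwz)]
      simp [hwz]

theorem laurentHom_injective : Function.Injective (laurentHom 𝒜 u) := by
  refine (injective_iff_map_eq_zero _).mpr fun x hx =>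
    AddMonoidAlgebra.ext (Finsupp.ext fun z => ?_)
  have h := coe_decompose_laurentHom hu x z
  rw [hx, DirectSum.decompose_zero, DirectSum.zero_apply, ZeroMemClass.coe_zero, eq_comm,
    Units.mul_left_eq_zero] at h
  exact Subtype.ext h

theorem laurentHom_mem_iff {x : AddMonoidAlgebra (𝒜 0) F} {z : F} :
    laurentHom 𝒜 u x ∈ 𝒜 z ↔ ∃ a, x = single z a := by
  refine ⟨fun h => ⟨x.coeff z, AddMonoidAlgebra.ext (Finsupp.ext fun w => ?_)⟩, ?_⟩
  · rcases eq_or_ne w z with rfl | hwz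
    · simp [coeff_single]
    · have hw := coe_decompose_laurentHom hu x w
      rw [DirectSum.decompose_of_mem_ne 𝒜 h (Subtype.coe_injective.ne hwz.symm), eq_comm,
        Units.mul_left_eq_zero] at hw
      simp [coeff_single, hwz.symm, ZeroMemClass.coe_eq_zero.mp hw]
  · rintro ⟨a, rfl⟩
    rw [laurentHom_single]
    exact SetLike.mul_mem_graded_zero_left a.2 (hu z)

theorem range_laurentHom : (laurentHom 𝒜 u).range.toSubring = veroneseSubring 𝒜 F := by
  apply le_antisymm
  · rintro _ ⟨x, rfl⟩
    change laurentHom 𝒜 u x ∈ _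
    rw [laurentHom_apply]
    exact Subring.sum_mem _ fun z _ => Subring.subset_closure
      (Set.mem_biUnion z.2 (SetLike.mul_mem_graded_zero_left (x.coeff z).2 (hu z)))
  · refine Subring.closure_le.mpr (Set.iUnion₂_subset fun d hd t ht => ?_)
    let z : F := ⟨d, hd⟩
    have ha : t * ↑(u (.ofAdd z))⁻¹ ∈ 𝒜 0 := by
      simpa [z] using SetLike.mul_mem_graded ht (hu (-z))
    refine ⟨single z ⟨_, ha⟩, ?_⟩
    change laurentHom 𝒜 u _ = t
    rw [laurentHom_single, Units.inv_mul_cancel_right]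

noncomputable def laurentEquiv : AddMonoidAlgebra (𝒜 0) F ≃+* veroneseSubring 𝒜 F :=
  (AlgEquiv.ofInjective _ (laurentHom_injective hu)).toRingEquiv.trans
    (RingEquiv.subringCongr (range_laurentHom hu))

theorem coe_laurentEquiv (x : AddMonoidAlgebra (𝒜 0) F) :
    (laurentEquiv hu x : S) = laurentHom 𝒜 u x :=
  rfl

end GradedRing

open GradedRing in
theorem stmt_8 {D S : Type*} [AddCommGroup D] [AddGroup.FG D] [DecidableEq D] [CommRing S]
    (𝒜 : D → AddSubgroup S) [GradedRing 𝒜]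
    (hper : ∃ D' : AddSubgroup D,
      (D' : Set D) = {d : D | ∃ u : Sˣ, (u : S) ∈ 𝒜 d} ∧ D'.FiniteIndex) :
    ∃ F : AddSubgroup D, F.FiniteIndex ∧ Module.Free ℤ F ∧
      ∃ e : veroneseSubring 𝒜 F ≃+* AddMonoidAlgebra (𝒜 0) F,
        (∀ (a : 𝒜 0) (ha : (a : S) ∈ veroneseSubring 𝒜 F),
            e ⟨(a : S), ha⟩ = AddMonoidAlgebra.single (0 : F) a) ∧
        ∀ (d : D) (hd : d ∈ F) (s : veroneseSubring 𝒜 F),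
          (s : S) ∈ 𝒜 d ↔ ∃ a : 𝒜 0, e s = AddMonoidAlgebra.single (⟨d, hd⟩ : F) a := by
  obtain ⟨D', hD', hD'fin⟩ := hper
  obtain ⟨F, hFD', hFfin, hFfree⟩ := D'.exists_free_finiteIndex_le
  obtain ⟨u, hu⟩ := exists_unitsHom_of_free F fun d hd => (Set.ext_iff.mp hD' d).mp (hFD' hd)
  refine ⟨F, hFfin, hFfree, (laurentEquiv hu).symm, fun a ha => ?_, fun d hd s => ?_⟩
  · rw [RingEquiv.symm_apply_eq]
    ext
    simp [coe_laurentEquiv, laurentHom_single]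
  · rw [← laurentHom_mem_iff hu, ← coe_laurentEquiv hu, RingEquiv.apply_symm_apply]
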